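/- arXiv:1709.06809 — 8 statements merged into one kernel-verified Lean document; each statement's English description precedes it below -/
import Mathlib

section
/- If a real n×n matrix A is Metzler (all off-diagonal entries nonnegative) and there exists a vector d with strictly positive entries such that all entries of -A·d are strictly positive, then A is Hurwitz, i.e., every eigenvalue of A has negative real part. -/
open Matrix

/-- `A` is Hurwitz: every complex eigenvalue has negative real part. -/
def IsHurwitz {n : Type*} [Fintype n] [DecidableEq n] (A : Matrix n n ℝ) : Prop :=
  ∀ μ ∈ spectrum ℂ (A.map (algebraMap ℝ ℂ)), μ.re < 0

theorem metzler_pos_vector_implies_hurwitz {n : ℕ} (A : Matrix (Fin n) (Fin n) ℝ)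
    (hMetzler : ∀ i j, i ≠ j → 0 ≤ A i j)
    (d : Fin n → ℝ) (hd : ∀ i, 0 < d i)
    (hAd : ∀ i, 0 < (-(A.mulVec d)) i) :
    IsHurwitz A := by
  intro μ hμ
  set B := A.map (algebraMap ℝ ℂ) with hB
  rw [spectrum.mem_iff, Matrix.isUnit_iff_isUnit_det, isUnit_iff_ne_zero, not_not] at hμ
  obtain ⟨v, hv0, hv⟩ := (Matrix.exists_mulVec_eq_zero_iff).2 hμ
  have heig : ∀ i, μ * v i = ∑ j, (A i j : ℂ) * v j := by
    intro i
    have h := congrFun hv i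
    rw [Matrix.sub_mulVec, Algebra.algebraMap_eq_smul_one, Matrix.smul_mulVec,
      Matrix.one_mulVec] at h
    have h2 : (μ • v) i - B.mulVec v i = 0 := h
    have : μ * v i = B.mulVec v i := by
      simpa [sub_eq_zero] using h2
    rw [this]
    simp [hB, Matrix.mulVec, dotProduct, Matrix.map_apply]
  obtain ⟨k, hk⟩ := Function.ne_iff.1 hv0
  have hk' : (0:ℝ) < ‖v k‖ := by simpa using hk
  obtain ⟨i, -, hi⟩ := Finset.exists_max_image Finset.univ (fun j => ‖v j‖ / d j)
    ⟨k, Finset.mem_univ k⟩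
  have hrat : 0 < ‖v i‖ / d i :=
    lt_of_lt_of_le (div_pos hk' (hd k)) (hi k (Finset.mem_univ k))
  have hvi : 0 < ‖v i‖ := by
    by_contra h
    push_neg at h
    have : ‖v i‖ / d i ≤ 0 := div_nonpos_of_nonpos_of_nonneg h (hd i).le
    linarith
  have hmax : ∀ j, ‖v j‖ ≤ d j * (‖v i‖ / d i) := by
    intro j
    have := hi j (Finset.mem_univ j)
    rw [div_le_div_iff₀ (hd j) (hd i)] at this
    have h2 : d j * (‖v i‖ / d i) = d j * ‖v i‖ / d i := by ring
    rw [h2, le_div_iff₀ (hd i)]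
    linarith
  -- eigen equation rearranged
  have heq : (μ - (A i i : ℂ)) * v i = ∑ j ∈ Finset.univ.erase i, (A i j : ℂ) * v j := by
    have h1 := heig i
    have hsplit : ∑ j, (A i j : ℂ) * v j
        = (∑ j ∈ Finset.univ.erase i, (A i j : ℂ) * v j) + (A i i : ℂ) * v i :=
      (Finset.sum_erase_add _ _ (Finset.mem_univ i)).symm
    rw [hsplit] at h1
    rw [sub_mul]
    linear_combination h1
  have hsum : ∑ j ∈ Finset.univ.erase i, A i j * d j < -(A i i * d i) := by
    have h := hAd i
    simp only [Pi.neg_apply, Matrix.mulVec, dotProduct] at h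
    have h2 : ∑ j, A i j * d j < 0 := by linarith
    have hsplit : ∑ j, A i j * d j
        = (∑ j ∈ Finset.univ.erase i, A i j * d j) + A i i * d i :=
      (Finset.sum_erase_add _ _ (Finset.mem_univ i)).symm
    rw [hsplit] at h2
    linarith
  have hnorm : ‖μ - (A i i : ℂ)‖ * ‖v i‖ ≤ ∑ j ∈ Finset.univ.erase i, A i j * ‖v j‖ := by
    rw [← norm_mul, heq]
    refine (norm_sum_le _ _).trans (le_of_eq (Finset.sum_congr rfl fun j hj => ?_))
    rw [norm_mul, Complex.norm_real, Real.norm_eq_abs,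
      abs_of_nonneg (hMetzler i j (Finset.ne_of_mem_erase hj).symm)]
  have hstep : ∑ j ∈ Finset.univ.erase i, A i j * ‖v j‖
      ≤ (∑ j ∈ Finset.univ.erase i, A i j * d j) * (‖v i‖ / d i) := by
    rw [Finset.sum_mul]
    refine Finset.sum_le_sum fun j hj => ?_
    have := mul_le_mul_of_nonneg_left (hmax j) (hMetzler i j (Finset.ne_of_mem_erase hj).symm)
    linarith [this]
  have hfin : ‖μ - (A i i : ℂ)‖ * ‖v i‖ < -(A i i) * ‖v i‖ := by
    have h1 : (∑ j ∈ Finset.univ.erase i, A i j * d j) * (‖v i‖ / d i)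
        < (-(A i i * d i)) * (‖v i‖ / d i) :=
      mul_lt_mul_of_pos_right hsum hrat
    have hdi : d i ≠ 0 := (hd i).ne'
    have h2 : (-(A i i * d i)) * (‖v i‖ / d i) = -(A i i) * ‖v i‖ := by
      field_simp
    linarith [hnorm, hstep]
  have habs : ‖μ - (A i i : ℂ)‖ < -(A i i) := lt_of_mul_lt_mul_right hfin hvi.le
  have hre : μ.re - A i i ≤ ‖μ - (A i i : ℂ)‖ := by
    have := Complex.re_le_norm (μ - (A i i : ℂ))
    simpa [Complex.sub_re, Complex.ofReal_re] using this
  linarith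
end

section
/- A Metzler matrix A ∈ ℝ^{n×n} is Hurwitz if and only if there exists a diagonal matrix P with positive diagonal entries such that P·A + Aᵀ·P is negative definite. -/
/-!
If `P = diagonal p` and `Q = -(PA + AᵀP)` are positive definite and `x + iy` is an eigenvector of
`A` with eigenvalue `μ`, then `xᵀQx + yᵀQy = -2 Re μ (xᵀPx + yᵀPy)`, so `Re μ < 0`.

Conversely, for a Metzler Hurwitz `A` and small `t > 0` the matrix `C = 1 + tA` is entrywise
nonnegative with spectrum inside the unit disc, so by Gelfand's formula the Neumann series
`(1 - C)⁻¹ = ∑ Cᵏ` converges; it is entrywise nonnegative with diagonal `≥ 1`, hence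
`x = (1 - C)⁻¹ 𝟙 > 0` and `Ax = -t⁻¹ 𝟙 < 0`. The same for `Aᵀ` gives `z > 0` with `Aᵀz < 0`,
and `p = z / x` works: `S = PA + AᵀP` is symmetric and Metzler with `Sx = p ∘ Ax + Aᵀz < 0`,
and writing a vector as `x ∘ u` shows that such an `S` is negative definite.
-/

open Matrix

open Filter Topology Finset
open scoped NNReal

theorem summable_norm_pow_of_forall_norm_lt_one {A : Type*} [NormedRing A] [NormedAlgebra ℂ A]
    [CompleteSpace A] {a : A} (ha : ∀ z ∈ spectrum ℂ a, ‖z‖ < 1) :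
    Summable fun k : ℕ ↦ ‖a ^ k‖ := by
  nontriviality A
  have hρ : spectralRadius ℂ a < (1 : ℝ≥0) :=
    spectrum.spectralRadius_lt_of_forall_lt a fun z hz ↦ by exact_mod_cast ha z hz
  obtain ⟨r, hρr, hr1⟩ := ENNReal.lt_iff_exists_nnreal_btwn.mp hρ
  have hbound : ∀ᶠ k : ℕ in atTop, ‖‖a ^ k‖‖ ≤ (r : ℝ) ^ k := by
    have hgelfand := spectrum.pow_nnnorm_pow_one_div_tendsto_nhds_spectralRadius a
    filter_upwards [hgelfand.eventually_lt_const hρr, eventually_gt_atTop 0] with k hk hk0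
    rw [one_div, ENNReal.rpow_inv_lt_iff (by positivity), ENNReal.rpow_natCast, ← ENNReal.coe_pow,
      ENNReal.coe_lt_coe] at hk
    simpa using NNReal.coe_le_coe.mpr hk.le
  exact Summable.of_norm_bounded_eventually_nat
    (summable_geometric_of_lt_one r.coe_nonneg (by exact_mod_cast hr1)) hbound

theorem Complex.eventually_norm_one_add_mul_lt_one {z : ℂ} (hz : z.re < 0) :
    ∀ᶠ t : ℝ in 𝓝[>] 0, ‖1 + t * z‖ < 1 := by
  have hz0 : 0 < Complex.normSq z := Complex.normSq_pos.mpr fun h ↦ by simp [h] at hz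
  filter_upwards [Ioo_mem_nhdsGT (div_pos (by linarith : 0 < -2 * z.re) hz0)] with t ⟨ht0, ht⟩
  rw [lt_div_iff₀ hz0, Complex.normSq_apply] at ht
  rw [← sq_lt_one_iff₀ (norm_nonneg _), Complex.sq_norm, Complex.normSq_apply]
  simp only [Complex.add_re, Complex.one_re, Complex.mul_re, Complex.ofReal_re, Complex.ofReal_im,
    zero_mul, sub_zero, Complex.add_im, Complex.one_im, Complex.mul_im, zero_add]
  -- `‖1 + t z‖² = 1 + t (2 Re z + t ‖z‖²)`
  nlinarith

namespace Matrix

variable {n : Type*} [Fintype n]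

theorem IsSymm.dotProduct_mulVec_mul_eq {S : Matrix n n ℝ} (hS : S.IsSymm) (x u : n → ℝ) :
    (x * u) ⬝ᵥ S *ᵥ (x * u)
      = ∑ i, (S *ᵥ x) i * x i * u i ^ 2 - (∑ i, ∑ j, S i j * x i * x j * (u i - u j) ^ 2) / 2 := by
  have hrow : ∑ i, (S *ᵥ x) i * x i * u i ^ 2 = ∑ i, ∑ j, S i j * x i * x j * u i ^ 2 := by
    simp only [mulVec, dotProduct, sum_mul]
    exact sum_congr rfl fun i _ ↦ sum_congr rfl fun j _ ↦ by ring
  have hcol : ∑ i, ∑ j, S i j * x i * x j * u j ^ 2 = ∑ i, ∑ j, S i j * x i * x j * u i ^ 2 := by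
    rw [sum_comm]
    exact sum_congr rfl fun i _ ↦ sum_congr rfl fun j _ ↦ by rw [hS.apply]; ring
  have hquad : (x * u) ⬝ᵥ S *ᵥ (x * u) = ∑ i, ∑ j, S i j * x i * x j * (u i * u j) := by
    simp only [mulVec, dotProduct, mul_sum, Pi.mul_apply]
    exact sum_congr rfl fun i _ ↦ sum_congr rfl fun j _ ↦ by ring
  have hexpand : ∑ i, ∑ j, S i j * x i * x j * (u i - u j) ^ 2
      = ∑ i, ∑ j, S i j * x i * x j * u i ^ 2 + ∑ i, ∑ j, S i j * x i * x j * u j ^ 2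
        - 2 * ∑ i, ∑ j, S i j * x i * x j * (u i * u j) := by
    simp only [mul_sum, ← sum_add_distrib, ← sum_sub_distrib]
    exact sum_congr rfl fun i _ ↦ sum_congr rfl fun j _ ↦ by ring
  rw [hexpand, hcol, hrow, hquad]
  ring

theorem posDef_neg_of_mulVec_neg {S : Matrix n n ℝ} (hS : S.IsSymm)
    (hoff : ∀ i j, i ≠ j → 0 ≤ S i j) {x : n → ℝ} (hx : ∀ i, 0 < x i)
    (hSx : ∀ i, (S *ᵥ x) i < 0) : (-S).PosDef := by
  refine PosDef.of_dotProduct_mulVec_pos (isHermitian_iff_isSymm.mpr hS.neg) fun v hv ↦ ?_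
  have hv_eq : x * (v / x) = v := funext fun i ↦ mul_div_cancel₀ _ (hx i).ne'
  obtain ⟨i₀, hi₀⟩ := Function.ne_iff.mp hv
  have hdiag : ∑ i, (S *ᵥ x) i * x i * (v / x) i ^ 2 < 0 := by
    refine sum_neg' (fun i _ ↦ ?_) ⟨i₀, mem_univ _, ?_⟩
    · exact mul_nonpos_of_nonpos_of_nonneg (mul_neg_of_neg_of_pos (hSx i) (hx i)).le (sq_nonneg _)
    · exact mul_neg_of_neg_of_pos (mul_neg_of_neg_of_pos (hSx i₀) (hx i₀))
        (pow_two_pos_of_ne_zero (div_ne_zero hi₀ (hx i₀).ne'))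
  have hoffdiag : 0 ≤ ∑ i, ∑ j, S i j * x i * x j * ((v / x) i - (v / x) j) ^ 2 := by
    refine sum_nonneg fun i _ ↦ sum_nonneg fun j _ ↦ ?_
    rcases eq_or_ne i j with rfl | hij
    · simp
    · exact mul_nonneg (mul_nonneg (mul_nonneg (hoff i j hij) (hx i).le) (hx j).le) (sq_nonneg _)
  have hquad := hS.dotProduct_mulVec_mul_eq x (v / x)
  rw [hv_eq] at hquad
  simp only [star_trivial, neg_mulVec, dotProduct_neg]
  linarith

theorem PosDef.dotProduct_mulVec_re_add_im_pos {M : Matrix n n ℝ} (hM : M.PosDef)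
    {v : n → ℂ} (hv : v ≠ 0) :
    0 < (fun i ↦ (v i).re) ⬝ᵥ M *ᵥ (fun i ↦ (v i).re)
      + (fun i ↦ (v i).im) ⬝ᵥ M *ᵥ (fun i ↦ (v i).im) := by
  have hquad (u : n → ℝ) : 0 ≤ u ⬝ᵥ M *ᵥ u := by
    simpa using hM.posSemidef.dotProduct_mulVec_nonneg u
  have hquad_pos {u : n → ℝ} (hu : u ≠ 0) : 0 < u ⬝ᵥ M *ᵥ u := by
    simpa using hM.dotProduct_mulVec_pos hu
  by_cases hre : (fun i ↦ (v i).re) = 0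
  · have him : (fun i ↦ (v i).im) ≠ 0 := fun him ↦
      hv (funext fun i ↦ Complex.ext (congrFun hre i) (congrFun him i))
    linarith [hquad_pos him, hquad fun i ↦ (v i).re]
  · linarith [hquad_pos hre, hquad fun i ↦ (v i).im]

theorem IsSymm.dotProduct_mul_add_transpose_mul_mulVec {P : Matrix n n ℝ} (hP : P.IsSymm)
    (A : Matrix n n ℝ) (u : n → ℝ) :
    u ⬝ᵥ (P * A + Aᵀ * P) *ᵥ u = 2 * (u ⬝ᵥ P *ᵥ (A *ᵥ u)) := by
  rw [add_mulVec, dotProduct_add, ← mulVec_mulVec, ← mulVec_mulVec, dotProduct_mulVec u Aᵀ,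
    vecMul_transpose, dotProduct_comm, dotProduct_mulVec, ← mulVec_transpose, hP.eq]
  ring

variable [DecidableEq n]

theorem spectrum_transpose {R : Type*} [CommRing R] (A : Matrix n n R) :
    spectrum R Aᵀ = spectrum R A := by
  ext r
  simp only [spectrum.mem_iff, ← isUnit_transpose (algebraMap R _ r - A), transpose_sub]
  simp [algebraMap_eq_diagonal]

theorem summable_pow_of_forall_norm_lt_one {C : Matrix n n ℝ}
    (hC : ∀ μ ∈ spectrum ℂ (C.map (algebraMap ℝ ℂ)), ‖μ‖ < 1) : Summable fun k : ℕ ↦ C ^ k := by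
  let _ := Matrix.linftyOpNormedRing (n := n) (α := ℂ)
  let _ := Matrix.linftyOpNormedAlgebra (n := n) (R := ℂ) (α := ℂ)
  have _ : CompleteSpace (Matrix n n ℂ) := FiniteDimensional.complete ℂ _
  have hsum := (summable_norm_pow_of_forall_norm_lt_one hC).of_norm
  refine Pi.summable.mpr fun i ↦ Pi.summable.mpr fun j ↦ ?_
  refine Complex.summable_ofReal.mp ((Pi.summable.mp (Pi.summable.mp hsum i) j).congr fun k ↦ ?_)
  rw [← C.map_pow]
  rfl

theorem exists_pos_one_sub_mulVec_eq_one {C : Matrix n n ℝ} (hC : ∀ i j, 0 ≤ C i j)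
    (hsum : Summable fun k : ℕ ↦ C ^ k) :
    ∃ x : n → ℝ, (∀ i, 0 < x i) ∧ (1 - C) *ᵥ x = fun _ ↦ 1 := by
  set E := ∑' k : ℕ, C ^ k
  have hentry : ∀ i j, HasSum (fun k : ℕ ↦ (C ^ k) i j) (E i j) := fun i j ↦
    Pi.hasSum.mp (Pi.hasSum.mp hsum.hasSum i) j
  have hE_nonneg : ∀ i j, 0 ≤ E i j := fun i j ↦
    (hentry i j).nonneg fun k ↦ pow_apply_nonneg hC k i j
  have hE_diag : ∀ i, 1 ≤ E i i := fun i ↦ by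
    simpa using (hentry i i).summable.le_tsum 0 (fun k _ ↦ pow_apply_nonneg hC k i i)
      |>.trans_eq (hentry i i).tsum_eq
  refine ⟨E *ᵥ fun _ ↦ 1, fun i ↦ ?_, ?_⟩
  · calc (0 : ℝ) < E i i := one_pos.trans_le (hE_diag i)
      _ ≤ ∑ j, E i j := single_le_sum (fun j _ ↦ hE_nonneg i j) (mem_univ i)
      _ = (E *ᵥ fun _ ↦ 1) i := by simp [mulVec, dotProduct]
  · rw [mulVec_mulVec, hsum.one_sub_mul_tsum_pow, one_mulVec]

theorem exists_eq_one_add_mul_of_mem_spectrum_map {A : Matrix n n ℝ} {t : ℝ} (ht : t ≠ 0)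
    {μ : ℂ} (hμ : μ ∈ spectrum ℂ ((1 + t • A).map (algebraMap ℝ ℂ))) :
    ∃ ν ∈ spectrum ℂ (A.map (algebraMap ℝ ℂ)), μ = 1 + t * ν := by
  have hmap : (1 + t • A).map (algebraMap ℝ ℂ)
      = algebraMap ℂ _ 1 + Units.mk0 (t : ℂ) (by exact_mod_cast ht) • A.map (algebraMap ℝ ℂ) := by
    ext i j
    by_cases h : i = j <;> simp [h, Units.smul_def]
  rw [hmap, ← spectrum.singleton_add_eq, spectrum.unit_smul_eq_smul] at hμ
  obtain ⟨_, rfl, _, ⟨ν, hν, rfl⟩, rfl⟩ := hμ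
  exact ⟨ν, hν, by simp⟩

end Matrix

section IsHurwitz

variable {n : Type*} [Fintype n] [DecidableEq n]

theorem IsHurwitz.transpose {A : Matrix n n ℝ} (hA : IsHurwitz A) : IsHurwitz Aᵀ :=
  fun μ hμ ↦ hA μ (by rwa [transpose_map, spectrum_transpose] at hμ)

theorem IsHurwitz.exists_pos_mulVec_neg {A : Matrix n n ℝ} (hH : IsHurwitz A)
    (hA : ∀ i j, i ≠ j → 0 ≤ A i j) : ∃ x : n → ℝ, (∀ i, 0 < x i) ∧ ∀ i, (A *ᵥ x) i < 0 := by
  obtain ⟨t, ht, hdiag, hspec⟩ : ∃ t : ℝ, 0 < t ∧ (∀ i, 0 ≤ 1 + t * A i i) ∧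
      ∀ ν ∈ spectrum ℂ (A.map (algebraMap ℝ ℂ)), ‖1 + t * ν‖ < 1 := by
    have hdiag : ∀ᶠ t : ℝ in 𝓝[>] 0, ∀ i, 0 ≤ 1 + t * A i i := by
      refine eventually_all.mpr fun i ↦ ?_
      have : Tendsto (fun t : ℝ ↦ 1 + t * A i i) (𝓝 0) (𝓝 1) := by
        simpa using ((continuous_id.mul continuous_const).const_add 1).tendsto (0 : ℝ)
      exact nhdsWithin_le_nhds ((this.eventually (eventually_gt_nhds one_pos)).mono fun _ h ↦ h.le)
    have hspec := ((finite_spectrum _).eventually_all).mpr fun ν hν ↦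
      Complex.eventually_norm_one_add_mul_lt_one (hH ν hν)
    exact (eventually_mem_nhdsWithin.and (hdiag.and hspec)).exists
  have hC : ∀ i j, 0 ≤ (1 + t • A) i j := fun i j ↦ by
    rcases eq_or_ne i j with rfl | hij
    · simpa using hdiag i
    · simpa [one_apply_ne hij] using mul_nonneg ht.le (hA i j hij)
  have hCspec : ∀ μ ∈ spectrum ℂ ((1 + t • A).map (algebraMap ℝ ℂ)), ‖μ‖ < 1 := fun μ hμ ↦ by
    obtain ⟨ν, hν, rfl⟩ := exists_eq_one_add_mul_of_mem_spectrum_map ht.ne' hμ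
    exact hspec ν hν
  obtain ⟨x, hx, hCx⟩ :=
    exists_pos_one_sub_mulVec_eq_one hC (summable_pow_of_forall_norm_lt_one hCspec)
  refine ⟨x, hx, fun i ↦ ?_⟩
  have hAx : -(t * (A *ᵥ x) i) = 1 := by
    simpa [neg_mulVec, smul_mulVec] using congrFun hCx i
  nlinarith

theorem IsHurwitz.of_posDef_lyapunov {A P : Matrix n n ℝ} (hP : P.PosDef)
    (hQ : (-(P * A + Aᵀ * P)).PosDef) : IsHurwitz A := by
  intro μ hμ
  rw [← spectrum_toLin', ← Module.End.hasEigenvalue_iff_mem_spectrum] at hμ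
  obtain ⟨v, hv⟩ := hμ.exists_hasEigenvector
  have hAv : A.map (algebraMap ℝ ℂ) *ᵥ v = μ • v := by simpa using hv.apply_eq_smul
  set x := fun i ↦ (v i).re
  set y := fun i ↦ (v i).im
  have hAx : A *ᵥ x = μ.re • x - μ.im • y := by
    ext i
    simpa [mulVec, dotProduct, Complex.re_sum, x, y] using congrArg Complex.re (congrFun hAv i)
  have hAy : A *ᵥ y = μ.re • y + μ.im • x := by
    ext i
    simpa [mulVec, dotProduct, Complex.im_sum, x, y, add_comm] using
      congrArg Complex.im (congrFun hAv i)
  have hPs : P.IsSymm := isHermitian_iff_isSymm.mp hP.isHermitian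
  have hPyx : y ⬝ᵥ P *ᵥ x = x ⬝ᵥ P *ᵥ y := by
    rw [dotProduct_comm, dotProduct_mulVec, ← mulVec_transpose, hPs.eq]
  have hQP : x ⬝ᵥ (-(P * A + Aᵀ * P)) *ᵥ x + y ⬝ᵥ (-(P * A + Aᵀ * P)) *ᵥ y
      = -2 * μ.re * (x ⬝ᵥ P *ᵥ x + y ⬝ᵥ P *ᵥ y) := by
    simp only [neg_mulVec, dotProduct_neg, hPs.dotProduct_mul_add_transpose_mul_mulVec, hAx, hAy, mulVec_sub,
      mulVec_add, mulVec_smul, dotProduct_sub, dotProduct_add, dotProduct_smul, smul_eq_mul, hPyx]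
    ring
  have hQpos := hQ.dotProduct_mulVec_re_add_im_pos hv.2
  have hPpos := hP.dotProduct_mulVec_re_add_im_pos hv.2
  rw [hQP] at hQpos
  nlinarith

end IsHurwitz

theorem metzler_hurwitz_iff_diagonal_lyapunov {n : ℕ} (A : Matrix (Fin n) (Fin n) ℝ)
    (hMetzler : ∀ i j, i ≠ j → 0 ≤ A i j) :
    IsHurwitz A ↔
      ∃ p : Fin n → ℝ, (∀ i, 0 < p i) ∧
        (-(Matrix.diagonal p * A + Aᵀ * Matrix.diagonal p)).PosDef := by
  constructor
  · intro hH
    obtain ⟨x, hx, hAx⟩ := hH.exists_pos_mulVec_neg hMetzler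
    obtain ⟨z, hz, hAz⟩ :=
      hH.transpose.exists_pos_mulVec_neg fun i j hij ↦ hMetzler j i hij.symm
    have hp : ∀ i, 0 < (z / x) i := fun i ↦ div_pos (hz i) (hx i)
    have hDx : diagonal (z / x) *ᵥ x = z := funext fun k ↦ by
      rw [mulVec_diagonal, Pi.div_apply, div_mul_cancel₀ _ (hx k).ne']
    refine ⟨z / x, hp, posDef_neg_of_mulVec_neg ?_ (fun i j hij ↦ ?_) hx fun i ↦ ?_⟩
    · simpa [transpose_mul] using isSymm_add_transpose_self (diagonal (z / x) * A)
    · simpa [diagonal_mul, mul_diagonal] using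
        add_nonneg (mul_nonneg (hp i).le (hMetzler i j hij))
          (mul_nonneg (hMetzler j i hij.symm) (hp j).le)
    · rw [add_mulVec, ← mulVec_mulVec, ← mulVec_mulVec, hDx, Pi.add_apply, mulVec_diagonal]
      exact add_neg_of_nonpos_of_neg (mul_nonpos_of_nonneg_of_nonpos (hp i).le (hAx i).le) (hAz i)
  · rintro ⟨p, hp, hQ⟩
    exact IsHurwitz.of_posDef_lyapunov (posDef_diagonal_iff.mpr hp) hQ
end

section
/- Let A ∈ ℝ^{n×n} have negative diagonal entries, and suppose there exist positive scalars d_1,…,d_n and e_1,…,e_n such that for all i: -a_{ii} d_i > Σ_{j≠i} |a_{ij}| d_j and -a_{ii} e_i > Σ_{j≠i} |a_{ji}| e_j. Then the diagonal matrix P with P_{ii} = e_i/d_i satisfies P·A + Aᵀ·P negative definite. -/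
open Matrix Finset

/-!
Conjugating `-(P A + Aᵀ P)` by `D = diag d` gives `-(B + Bᵀ)` with `B = diag e * A * D`. The two
dominance hypotheses say that `B` is strictly diagonally dominant by rows and by columns with
negative diagonal, so the symmetric matrix `-(B + Bᵀ)` is strictly diagonally dominant with
positive diagonal, and Gershgorin's theorem puts its eigenvalues in the open right half-line.
-/

theorem Matrix.IsHermitian.hasEigenvalue_eigenvalues {𝕜 ι : Type*} [RCLike 𝕜] [Fintype ι]
    [DecidableEq ι] {A : Matrix ι ι 𝕜} (hA : A.IsHermitian) (i : ι) :
    Module.End.HasEigenvalue (toLin' A) (hA.eigenvalues i : 𝕜) := by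
  refine Module.End.hasEigenvalue_of_hasEigenvector (x := ⇑(hA.eigenvectorBasis i)) ⟨?_, ?_⟩
  · rw [Module.End.mem_eigenspace_iff, toLin'_apply, hA.mulVec_eigenvectorBasis,
      RCLike.real_smul_eq_coe_smul (K := 𝕜)]
  · exact (WithLp.ofLp_eq_zero 2).ne.2 <| hA.eigenvectorBasis.orthonormal.ne_zero i

open scoped ComplexOrder in
theorem Matrix.IsHermitian.posDef_of_sum_norm_row_lt_re_diag {𝕜 ι : Type*} [RCLike 𝕜]
    [Fintype ι] [DecidableEq ι] {A : Matrix ι ι 𝕜} (hA : A.IsHermitian)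
    (h : ∀ k, ∑ j ∈ univ.erase k, ‖A k j‖ < RCLike.re (A k k)) : A.PosDef := by
  refine hA.posDef_iff_eigenvalues_pos.2 fun i => ?_
  obtain ⟨k, hk⟩ := eigenvalue_mem_ball (hA.hasEigenvalue_eigenvalues i)
  rw [Metric.mem_closedBall, dist_comm, dist_eq_norm] at hk
  have hre := (RCLike.re_le_norm (A k k - hA.eigenvalues i)).trans hk
  rw [map_sub, RCLike.ofReal_re] at hre
  linarith [h k]

theorem Matrix.posDef_neg_add_transpose_of_sum_abs_lt_neg_diag {ι : Type*} [Fintype ι]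
    [DecidableEq ι] {B : Matrix ι ι ℝ}
    (hrow : ∀ i, ∑ j ∈ univ.erase i, |B i j| < -B i i)
    (hcol : ∀ i, ∑ j ∈ univ.erase i, |B j i| < -B i i) :
    (-(B + Bᵀ)).PosDef := by
  have hherm : (-(B + Bᵀ)).IsHermitian := by
    rw [IsHermitian, conjTranspose_eq_transpose_of_trivial, transpose_neg, transpose_add,
      transpose_transpose, add_comm]
  refine hherm.posDef_of_sum_norm_row_lt_re_diag fun i => ?_
  calc ∑ j ∈ univ.erase i, ‖(-(B + Bᵀ)) i j‖
      ≤ ∑ j ∈ univ.erase i, (|B i j| + |B j i|) :=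
        sum_le_sum fun j _ => by
          simpa only [Real.norm_eq_abs, neg_apply, add_apply, transpose_apply, abs_neg] using
            abs_add_le (B i j) (B j i)
    _ < -B i i + -B i i := by rw [sum_add_distrib]; exact add_lt_add (hrow i) (hcol i)
    _ = RCLike.re ((-(B + Bᵀ)) i i) := by simp

theorem Matrix.diagonal_mul_add_transpose_mul_diagonal_div {ι : Type*} [Fintype ι]
    [DecidableEq ι] (A : Matrix ι ι ℝ) {d : ι → ℝ} (hd : ∀ i, d i ≠ 0) (e : ι → ℝ) :
    diagonal d * (diagonal (fun i => e i / d i) * A + Aᵀ * diagonal (fun i => e i / d i))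
        * diagonal d = diagonal e * A * diagonal d + (diagonal e * A * diagonal d)ᵀ := by
  ext i j
  simp only [mul_diagonal, diagonal_mul, add_apply, transpose_apply]
  field_simp [hd i, hd j]

theorem Matrix.sum_erase_abs_diagonal_mul_mul_diagonal_lt {ι : Type*} [Fintype ι]
    [DecidableEq ι] {A : Matrix ι ι ℝ} {d e : ι → ℝ} (hd : ∀ i, 0 ≤ d i) (he : ∀ i, 0 < e i)
    (hrow : ∀ i, ∑ j ∈ univ.erase i, |A i j| * d j < -A i i * d i) (i : ι) :
    ∑ j ∈ univ.erase i, |(diagonal e * A * diagonal d) i j|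
      < -(diagonal e * A * diagonal d) i i := by
  simp only [mul_diagonal, diagonal_mul, abs_mul, abs_of_pos (he i), abs_of_nonneg (hd _)]
  calc ∑ j ∈ univ.erase i, e i * |A i j| * d j
      = e i * ∑ j ∈ univ.erase i, |A i j| * d j := by simp only [mul_sum, mul_assoc]
    _ < e i * (-A i i * d i) := mul_lt_mul_of_pos_left (hrow i) (he i)
    _ = -(e i * A i i * d i) := by ring

theorem scaled_diag_dominant_diagonal_lyapunov_general {n : ℕ} (A : Matrix (Fin n) (Fin n) ℝ)
    (d e : Fin n → ℝ) (hd : ∀ i, 0 < d i) (he : ∀ i, 0 < e i)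
    (hrow : ∀ i, -(A i i) * d i > ∑ j ∈ Finset.univ.erase i, |A i j| * d j)
    (hcol : ∀ i, -(A i i) * e i > ∑ j ∈ Finset.univ.erase i, |A j i| * e j) :
    (-(Matrix.diagonal (fun i => e i / d i) * A
        + Aᵀ * Matrix.diagonal (fun i => e i / d i))).PosDef := by
  set B := diagonal e * A * diagonal d
  have hB : (-(B + Bᵀ)).PosDef := by
    refine posDef_neg_add_transpose_of_sum_abs_lt_neg_diag (fun i => ?_) (fun i => ?_)
    · exact sum_erase_abs_diagonal_mul_mul_diagonal_lt (fun i => (hd i).le) he hrow i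
    · have := sum_erase_abs_diagonal_mul_mul_diagonal_lt (A := Aᵀ) (fun i => (he i).le) hd hcol i
      have hBt : Bᵀ = diagonal d * Aᵀ * diagonal e := by
        simp only [B, transpose_mul, diagonal_transpose, mul_assoc]
      rwa [← hBt] at this
  have hD : IsUnit (diagonal d) := by
    simpa [isUnit_diagonal, Pi.isUnit_iff] using fun i => (hd i).ne'
  rw [← hD.posDef_star_left_conjugate_iff, star_eq_conjTranspose, diagonal_conjTranspose,
    star_trivial, mul_neg, neg_mul,
    diagonal_mul_add_transpose_mul_diagonal_div A (fun i => (hd i).ne')]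
  exact hB

theorem scaled_diag_dominant_diagonal_lyapunov {n : ℕ} (A : Matrix (Fin n) (Fin n) ℝ)
    (hdiag : ∀ i, A i i < 0)
    (d e : Fin n → ℝ) (hd : ∀ i, 0 < d i) (he : ∀ i, 0 < e i)
    (hrow : ∀ i, -(A i i) * d i > ∑ j ∈ Finset.univ.erase i, |A i j| * d j)
    (hcol : ∀ i, -(A i i) * e i > ∑ j ∈ Finset.univ.erase i, |A j i| * e j) :
    (-(Matrix.diagonal (fun i => e i / d i) * A
        + Aᵀ * Matrix.diagonal (fun i => e i / d i))).PosDef :=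
  scaled_diag_dominant_diagonal_lyapunov_general A d e hd he hrow hcol
end

section
/- Let A ∈ ℝ^{n×n} and define its comparison matrix M(A) by M(A)_{ii} = -max(-a_{ii}, 0) and M(A)_{ij} = |a_{ij}| for i ≠ j. If M(A) is Hurwitz, then A is Hurwitz. -/
/-! If `μ` is an eigenvalue of `A` with eigenvector `x` and `Re μ ≥ 0`, the triangle inequality
applied row by row gives `M(A) |x| ≥ 0` entrywise. For a Metzler Hurwitz matrix `N` this forces
`|x| = 0`: for large `c`, `P = N + c I` is entrywise nonnegative with `P w ≥ c w`, so `‖P ^ k‖`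
grows like `c ^ k` and Gelfand's formula gives `ρ(P) ≥ c`; but every eigenvalue `z + c` of `P`
(with `Re z < 0`) has modulus `< c` once `c` is large. -/

open Matrix

/-- The comparison matrix of `A`. -/
def compMat {n : ℕ} (A : Matrix (Fin n) (Fin n) ℝ) : Matrix (Fin n) (Fin n) ℝ :=
  Matrix.of fun i j => if i = j then -max (-(A i i)) 0 else |A i j|

open Filter Topology NNReal ENNReal

theorem Complex.eventually_norm_add_ofReal_lt {z : ℂ} (hz : z.re < 0) :
    ∀ᶠ c : ℝ in atTop, ‖z + c‖ < c := by
  filter_upwards [eventually_gt_atTop 0, eventually_gt_atTop (‖z‖ ^ 2 / (-2 * z.re))]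
    with c hc0 hc
  have hsq : ‖z + c‖ ^ 2 = ‖z‖ ^ 2 + 2 * c * z.re + c ^ 2 := by
    simp only [Complex.sq_norm, Complex.normSq_add, Complex.normSq_ofReal, Complex.conj_ofReal,
      Complex.re_mul_ofReal]
    ring
  rw [div_lt_iff₀ (by linarith)] at hc
  exact (pow_lt_pow_iff_left₀ (norm_nonneg _) hc0.le two_ne_zero).1 (by nlinarith)

theorem spectrum.eventually_spectralRadius_algebraMap_add_lt {A : Type*} [NormedRing A]
    [NormedAlgebra ℂ A] [CompleteSpace A] [Nontrivial A] {a : A}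
    (hfin : (spectrum ℂ a).Finite) (ha : ∀ z ∈ spectrum ℂ a, z.re < 0) :
    ∀ᶠ c : ℝ≥0 in atTop, spectralRadius ℂ (algebraMap ℂ A c + a) < c := by
  have hz : ∀ᶠ c : ℝ≥0 in atTop, ∀ z ∈ spectrum ℂ a, ‖z + (c : ℝ)‖ < c :=
    hfin.eventually_all.2 fun z hz =>
      tendsto_coe_atTop.2 tendsto_id |>.eventually (Complex.eventually_norm_add_ofReal_lt (ha z hz))
  filter_upwards [hz] with c hc
  refine spectrum.spectralRadius_lt_of_forall_lt _ fun y hy => ?_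
  rw [← spectrum.singleton_add_eq] at hy
  obtain ⟨_, rfl, z, hz, rfl⟩ := Set.mem_add.1 hy
  rw [← NNReal.coe_lt_coe, coe_nnnorm, add_comm]
  exact hc z hz

theorem spectrum.le_spectralRadius_of_pow_mul_le_nnnorm_pow {A : Type*} [NormedRing A]
    [NormedAlgebra ℂ A] [CompleteSpace A] {a : A} {c q : ℝ≥0} (hq : 0 < q)
    (h : ∀ k : ℕ, c ^ k * q ≤ ‖a ^ k‖₊) : (c : ℝ≥0∞) ≤ spectralRadius ℂ a := by
  have hq_root : Tendsto (fun k : ℕ => q ^ (1 / k : ℝ)) atTop (𝓝 1) := by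
    simpa [Function.comp_def] using ((NNReal.continuousAt_rpow (Or.inl hq.ne')).tendsto.comp
      (tendsto_const_nhds.prodMk_nhds tendsto_one_div_atTop_nhds_zero_nat))
  have hlim : Tendsto (fun k : ℕ => ((c * q ^ (1 / k : ℝ) : ℝ≥0) : ℝ≥0∞)) atTop (𝓝 c) := by
    simpa using ENNReal.tendsto_coe.2 (tendsto_const_nhds.mul hq_root)
  refine le_of_tendsto_of_tendsto hlim
    (spectrum.pow_nnnorm_pow_one_div_tendsto_nhds_spectralRadius a) ?_
  filter_upwards [eventually_ne_atTop 0] with k hk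
  have hk' : (k : ℝ) ≠ 0 := Nat.cast_ne_zero.2 hk
  calc ((c * q ^ (1 / k : ℝ) : ℝ≥0) : ℝ≥0∞) = (((c ^ k * q) ^ (1 / k : ℝ) : ℝ≥0) : ℝ≥0∞) := by
        rw [NNReal.mul_rpow, ← NNReal.rpow_natCast, ← NNReal.rpow_mul, mul_one_div_cancel hk',
          NNReal.rpow_one]
    _ ≤ ((‖a ^ k‖₊ ^ (1 / k : ℝ) : ℝ≥0) : ℝ≥0∞) := by gcongr; exact h k
    _ = (‖a ^ k‖₊ : ℝ≥0∞) ^ (1 / k : ℝ) := ENNReal.coe_rpow_of_nonneg _ (by positivity)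

theorem Matrix.exists_mulVec_eq_smul_of_mem_spectrum {ι K : Type*} [Fintype ι] [DecidableEq ι]
    [Field K] {B : Matrix ι ι K} {μ : K} (hμ : μ ∈ spectrum K B) :
    ∃ x ≠ 0, B *ᵥ x = μ • x := by
  rw [← spectrum_toLin', ← Module.End.hasEigenvalue_iff_mem_spectrum] at hμ
  obtain ⟨x, hx, hx0⟩ := hμ.exists_hasEigenvector
  exact ⟨x, hx0, Module.End.mem_eigenspace_iff.1 hx⟩

theorem Matrix.mulVec_mono_of_nonneg {ι R : Type*} [Fintype ι] [Semiring R] [PartialOrder R]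
    [IsOrderedRing R] {P : Matrix ι ι R} (hP : ∀ i j, 0 ≤ P i j) {u v : ι → R} (huv : u ≤ v) :
    P *ᵥ u ≤ P *ᵥ v := fun i =>
  Finset.sum_le_sum fun j _ => mul_le_mul_of_nonneg_left (huv j) (hP i j)

theorem Matrix.pow_smul_le_pow_mulVec {ι R : Type*} [Fintype ι] [DecidableEq ι] [CommSemiring R]
    [PartialOrder R] [IsOrderedRing R] {P : Matrix ι ι R} (hP : ∀ i j, 0 ≤ P i j) {c : R}
    (hc : 0 ≤ c) {w : ι → R} (hPw : c • w ≤ P *ᵥ w) (k : ℕ) : c ^ k • w ≤ (P ^ k) *ᵥ w := by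
  induction k with
  | zero => simp
  | succ k ih =>
    calc c ^ (k + 1) • w = c ^ k • (c • w) := by rw [pow_succ, mul_smul]
      _ ≤ c ^ k • (P *ᵥ w) := smul_le_smul_of_nonneg_left hPw (pow_nonneg hc k)
      _ = P *ᵥ (c ^ k • w) := by rw [mulVec_smul]
      _ ≤ P *ᵥ ((P ^ k) *ᵥ w) := mulVec_mono_of_nonneg hP ih
      _ = (P ^ (k + 1)) *ᵥ w := by rw [mulVec_mulVec, pow_succ']

def IsMetzler {ι : Type*} (N : Matrix ι ι ℝ) : Prop :=
  ∀ i j, i ≠ j → 0 ≤ N i j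

theorem isMetzler_compMat {n : ℕ} (A : Matrix (Fin n) (Fin n) ℝ) : IsMetzler (compMat A) :=
  fun i j hij => by simp [compMat, hij]

theorem compMat_mulVec_norm_nonneg {n : ℕ} {A : Matrix (Fin n) (Fin n) ℝ} {μ : ℂ}
    (hμ : 0 ≤ μ.re) {x : Fin n → ℂ} (hx : A.map (algebraMap ℝ ℂ) *ᵥ x = μ • x) :
    0 ≤ compMat A *ᵥ fun j => ‖x j‖ := by
  intro i
  set S := ∑ j ∈ Finset.univ.erase i, |A i j| * ‖x j‖
  have hrow : (μ - A i i) * x i = ∑ j ∈ Finset.univ.erase i, (A i j : ℂ) * x j := by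
    have := congrFun hx i
    simp only [mulVec, dotProduct, map_apply, Pi.smul_apply, smul_eq_mul] at this
    rw [sub_mul, ← this, ← Finset.add_sum_erase _ _ (Finset.mem_univ i)]
    simp
  have hS : (μ.re - A i i) * ‖x i‖ ≤ S := by
    calc (μ.re - A i i) * ‖x i‖ ≤ ‖(μ - A i i) * x i‖ := by
          rw [norm_mul]
          gcongr
          simpa using Complex.re_le_norm (μ - A i i)
      _ ≤ S := by
          rw [hrow]
          refine (norm_sum_le _ _).trans_eq (Finset.sum_congr rfl fun j _ => ?_)
          rw [norm_mul, Complex.norm_real, Real.norm_eq_abs]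
  have hexpand : (compMat A *ᵥ fun j => ‖x j‖) i = -max (-A i i) 0 * ‖x i‖ + S := by
    rw [mulVec, dotProduct, ← Finset.add_sum_erase _ _ (Finset.mem_univ i)]
    refine congrArg₂ _ (by simp [compMat]) (Finset.sum_congr rfl fun j hj => ?_)
    simp [compMat, (Finset.ne_of_mem_erase hj).symm]
  have hS0 : 0 ≤ S := Finset.sum_nonneg fun j _ => by positivity
  have hmax : max (-A i i) 0 * ‖x i‖ ≤ S := by
    rw [max_mul_of_nonneg _ _ (norm_nonneg _), zero_mul]
    exact max_le (by nlinarith [mul_nonneg hμ (norm_nonneg (x i))]) hS0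
  rw [Pi.zero_apply, hexpand, neg_mul]
  linarith

section LinftyOpNorm

attribute [local instance] Matrix.linftyOpNormedAddCommGroup Matrix.linftyOpNormedRing
  Matrix.linftyOpNormedAlgebra

theorem Matrix.le_spectralRadius_map_of_smul_le_mulVec {ι : Type*} [Fintype ι] [DecidableEq ι]
    {P : Matrix ι ι ℝ} (hP : ∀ i j, 0 ≤ P i j) {c : ℝ≥0} {w : ι → ℝ} (hPw : (c : ℝ) • w ≤ P *ᵥ w)
    {i : ι} (hi : 0 < w i) : (c : ℝ≥0∞) ≤ spectralRadius ℂ (P.map (algebraMap ℝ ℂ)) := by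
  have hw : 0 < ‖w‖₊ := nnnorm_pos.2 fun h => hi.ne' (congrFun h i)
  refine spectrum.le_spectralRadius_of_pow_mul_le_nnnorm_pow (q := (w i).toNNReal / ‖w‖₊)
    (div_pos (Real.toNNReal_pos.2 hi) hw) fun k => ?_
  have hmap : ‖P.map (algebraMap ℝ ℂ) ^ k‖ = ‖P ^ k‖ := by
    rw [← RingHom.mapMatrix_apply, ← map_pow]
    simp [linfty_opNorm_def]
  rw [← mul_div_assoc, div_le_iff₀ hw, ← NNReal.coe_le_coe]
  push_cast
  rw [Real.coe_toNNReal _ hi.le, hmap]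
  calc (c : ℝ) ^ k * w i ≤ ((P ^ k) *ᵥ w) i := pow_smul_le_pow_mulVec hP c.2 hPw k i
    _ ≤ ‖(P ^ k) *ᵥ w‖ := (Real.le_norm_self _).trans (norm_le_pi_norm _ i)
    _ ≤ ‖P ^ k‖ * ‖w‖ := linfty_opNorm_mulVec _ _

theorem IsMetzler.eq_zero_of_nonneg_of_mulVec_nonneg {ι : Type*} [Fintype ι] [DecidableEq ι]
    {N : Matrix ι ι ℝ} (hN : IsMetzler N) (hH : IsHurwitz N) {w : ι → ℝ} (hw : 0 ≤ w)
    (hNw : 0 ≤ N *ᵥ w) : w = 0 := by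
  by_contra hw0
  obtain ⟨i, hi⟩ : ∃ i, 0 < w i := by
    by_contra! h
    exact hw0 (le_antisymm h hw)
  have : Nonempty ι := ⟨i⟩
  have hdiag_large : ∀ᶠ c : ℝ≥0 in atTop, ∀ j, -N j j ≤ c :=
    eventually_all.2 fun j => (tendsto_coe_atTop.2 tendsto_id).eventually_ge_atTop (-N j j)
  have hρ_large : ∀ᶠ c : ℝ≥0 in atTop,
      spectralRadius ℂ (algebraMap ℂ (Matrix ι ι ℂ) c + N.map (algebraMap ℝ ℂ)) < c :=
    spectrum.eventually_spectralRadius_algebraMap_add_lt (Matrix.finite_spectrum _) hH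
  obtain ⟨c, hdiag, hρ⟩ := (hdiag_large.and hρ_large).exists
  set P := N + (c : ℝ) • (1 : Matrix ι ι ℝ)
  have hP : ∀ j k, 0 ≤ P j k := by
    intro j k
    rcases eq_or_ne j k with rfl | hjk
    · simpa [P, add_comm] using neg_le_iff_add_nonneg.1 (hdiag j)
    · simpa [P, one_apply_ne hjk] using hN j k hjk
  have hPw : (c : ℝ) • w ≤ P *ᵥ w := by
    simpa [P, add_mulVec, smul_mulVec] using hNw
  have hPmap : P.map (algebraMap ℝ ℂ) = algebraMap ℂ _ c + N.map (algebraMap ℝ ℂ) := by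
    ext j k
    rcases eq_or_ne j k with rfl | hjk
    · simp [P, algebraMap_matrix_apply, add_comm]
    · simp [P, algebraMap_matrix_apply, hjk]
  exact (le_spectralRadius_map_of_smul_le_mulVec hP hPw hi).not_gt (hPmap ▸ hρ)

end LinftyOpNorm

theorem comparison_hurwitz_implies_hurwitz {n : ℕ} (A : Matrix (Fin n) (Fin n) ℝ)
    (h : IsHurwitz (compMat A)) : IsHurwitz A := by
  intro μ hμ
  by_contra! hre
  obtain ⟨x, hx0, hx⟩ := exists_mulVec_eq_smul_of_mem_spectrum hμ
  have hx_norm := (isMetzler_compMat A).eq_zero_of_nonneg_of_mulVec_nonneg h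
    (fun j => norm_nonneg (x j)) (compMat_mulVec_norm_nonneg hre hx)
  exact hx0 (funext fun j => norm_eq_zero.1 (congrFun hx_norm j))
end

section
/- Let A ∈ ℝ^{N×N} be block partitioned with blocks A_{ij} ∈ ℝ^{k_i×k_j}. Suppose each diagonal block A_{ii} is Hurwitz, and there exist positive scalars d_1,…,d_n such that for all i: (sup_{Re(λ)≥0} ‖(λI - A_{ii})^{-1}‖₂)^{-1} · d_i > Σ_{j≠i} ‖A_{ij}‖₂ · d_j. Then A is Hurwitz. -/
open Matrix Finset

/-- Spectral norm (maximal singular value) of a complex matrix. -/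
noncomputable def specNorm {p q : ℕ} (M : Matrix (Fin p) (Fin q) ℂ) : ℝ :=
  ‖LinearMap.toContinuousLinearMap (Matrix.toEuclideanLin M)‖

/-- Spectral norm (maximal singular value) of a real matrix. -/
noncomputable def specNormR {p q : ℕ} (M : Matrix (Fin p) (Fin q) ℝ) : ℝ :=
  ‖LinearMap.toContinuousLinearMap (Matrix.toEuclideanLin M)‖

/-- The `(i, j)` block of an `α`-partitioned matrix. -/
def blk {n : ℕ} {k : Fin n → ℕ} {R : Type*}
    (A : Matrix ((i : Fin n) × Fin (k i)) ((i : Fin n) × Fin (k i)) R)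
    (i j : Fin n) : Matrix (Fin (k i)) (Fin (k j)) R :=
  Matrix.of fun a b => A ⟨i, a⟩ ⟨j, b⟩

/-- The supremum of the resolvent norm of `B` over the closed right half-plane:
the H∞ norm of `(sI - B)⁻¹` when `B` is Hurwitz. -/
noncomputable def resolventSupRHP {m : ℕ} (B : Matrix (Fin m) (Fin m) ℝ) : ℝ :=
  ⨆ lam : {z : ℂ // 0 ≤ z.re},
    specNorm ((lam.1 • (1 : Matrix (Fin m) (Fin m) ℂ) - B.map (algebraMap ℝ ℂ))⁻¹)

/-!
Let `A v = μ v` with `v ≠ 0` and `0 ≤ Re μ`, and pick the block `i` maximising `‖v_i‖ / d_i`.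
Since `A_ii` is Hurwitz, `μ I - A_ii` is invertible, and the `i`-th block row of the eigen-equation
reads `v_i = (μ I - A_ii)⁻¹ ∑_{j ≠ i} A_ij v_j`. Taking norms and using the maximality of `i` gives
the scaled block Gershgorin bound `d_i ≤ ‖(μ I - A_ii)⁻¹‖ ∑_{j ≠ i} ‖A_ij‖ d_j`, and bounding the
resolvent norm by its supremum over the right half-plane contradicts the dominance hypothesis.
-/

open scoped Matrix.Norms.L2Operator

section EuclideanNorm

variable {m n : Type*} [Fintype n]

lemma norm_toLp_mulVec_le {𝕜 : Type*} [RCLike 𝕜] [Fintype m] [DecidableEq n]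
    (A : Matrix m n 𝕜) (x : n → 𝕜) :
    ‖(WithLp.toLp 2 (A *ᵥ x) : EuclideanSpace 𝕜 m)‖ ≤
      ‖A‖ * ‖(WithLp.toLp 2 x : EuclideanSpace 𝕜 n)‖ :=
  l2_opNorm_mulVec A (WithLp.toLp 2 x)

lemma norm_toLp_sq_eq_re_add_im (w : n → ℂ) :
    ‖(WithLp.toLp 2 w : EuclideanSpace ℂ n)‖ ^ 2 =
      ‖(WithLp.toLp 2 fun a => (w a).re : EuclideanSpace ℝ n)‖ ^ 2 +
        ‖(WithLp.toLp 2 fun a => (w a).im : EuclideanSpace ℝ n)‖ ^ 2 := by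
  simp only [EuclideanSpace.norm_sq_eq, ← Finset.sum_add_distrib, Complex.sq_norm,
    Complex.normSq_apply, Real.norm_eq_abs, sq_abs, ← sq]

lemma re_map_ofReal_mulVec (M : Matrix m n ℝ) (w : n → ℂ) (a : m) :
    ((M.map (algebraMap ℝ ℂ) *ᵥ w) a).re = (M *ᵥ fun b => (w b).re) a := by
  simp [mulVec, dotProduct, Complex.re_sum]

lemma im_map_ofReal_mulVec (M : Matrix m n ℝ) (w : n → ℂ) (a : m) :
    ((M.map (algebraMap ℝ ℂ) *ᵥ w) a).im = (M *ᵥ fun b => (w b).im) a := by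
  simp [mulVec, dotProduct, Complex.im_sum]

lemma l2_opNorm_map_ofReal_le [Fintype m] [DecidableEq n] (M : Matrix m n ℝ) :
    ‖M.map (algebraMap ℝ ℂ)‖ ≤ ‖M‖ := by
  rw [l2_opNorm_def]
  refine ContinuousLinearMap.opNorm_le_bound _ (norm_nonneg M) fun w => ?_
  rw [← pow_le_pow_iff_left₀ (norm_nonneg _) (by positivity) two_ne_zero]
  calc _ = ‖(WithLp.toLp 2 (M *ᵥ fun b => (w b).re) : EuclideanSpace ℝ m)‖ ^ 2 +
        ‖(WithLp.toLp 2 (M *ᵥ fun b => (w b).im) : EuclideanSpace ℝ m)‖ ^ 2 := by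
        simp only [LinearEquiv.trans_apply, LinearMap.coe_toContinuousLinearMap', toLpLin_apply,
          norm_toLp_sq_eq_re_add_im, re_map_ofReal_mulVec, im_map_ofReal_mulVec]
    _ ≤ (‖M‖ * ‖(WithLp.toLp 2 fun b => (w b).re : EuclideanSpace ℝ n)‖) ^ 2 +
        (‖M‖ * ‖(WithLp.toLp 2 fun b => (w b).im : EuclideanSpace ℝ n)‖) ^ 2 := by
        gcongr <;> exact norm_toLp_mulVec_le _ _
    _ = (‖M‖ * ‖w‖) ^ 2 := by
        rw [mul_pow, mul_pow, ← mul_add, ← norm_toLp_sq_eq_re_add_im, WithLp.toLp_ofLp, mul_pow]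

end EuclideanNorm

lemma exists_le_mul_sum_erase_of_le_mul_sum_erase {ι : Type*} [Fintype ι] [DecidableEq ι]
    {N d c : ι → ℝ} {a : ι → ι → ℝ} (hN : ∀ i, 0 ≤ N i) (hN0 : ∃ i, N i ≠ 0)
    (hd : ∀ i, 0 < d i) (hc : ∀ i, 0 ≤ c i) (ha : ∀ i j, 0 ≤ a i j)
    (h : ∀ i, N i ≤ c i * ∑ j ∈ univ.erase i, a i j * N j) :
    ∃ i, d i ≤ c i * ∑ j ∈ univ.erase i, a i j * d j := by
  obtain ⟨i₀, hi₀⟩ := hN0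
  obtain ⟨i, -, hmax⟩ := exists_max_image univ (fun j => N j / d j) ⟨i₀, mem_univ _⟩
  set t := N i / d i
  have ht : 0 < t :=
    (div_pos ((hN i₀).lt_of_ne' hi₀) (hd i₀)).trans_le (hmax i₀ (mem_univ _))
  have hNj : ∀ j, N j ≤ t * d j := fun j => (div_le_iff₀ (hd j)).1 (hmax j (mem_univ _))
  refine ⟨i, le_of_mul_le_mul_left ?_ ht⟩
  calc t * d i = N i := div_mul_cancel₀ _ (hd i).ne'
    _ ≤ c i * ∑ j ∈ univ.erase i, a i j * N j := h i
    _ ≤ c i * ∑ j ∈ univ.erase i, a i j * (t * d j) := by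
      gcongr with j
      exacts [hc i, ha i j, hNj j]
    _ = t * (c i * ∑ j ∈ univ.erase i, a i j * d j) := by
      rw [Finset.mul_sum, Finset.mul_sum, Finset.mul_sum]
      exact sum_congr rfl fun j _ => by ring

section BlockMatrix

variable {n : ℕ} {k : Fin n → ℕ}

lemma blk_map {R S : Type*} (A : Matrix ((i : Fin n) × Fin (k i)) ((i : Fin n) × Fin (k i)) R)
    (f : R → S) (i j : Fin n) : blk (A.map f) i j = (blk A i j).map f :=
  rfl

lemma mulVec_sigma_apply {R : Type*} [CommRing R]
    (M : Matrix ((i : Fin n) × Fin (k i)) ((i : Fin n) × Fin (k i)) R)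
    (v : ((i : Fin n) × Fin (k i)) → R) (i : Fin n) (a : Fin (k i)) :
    (M *ᵥ v) ⟨i, a⟩ = ∑ j, (blk M i j *ᵥ fun b => v ⟨j, b⟩) a := by
  simp only [mulVec, dotProduct, blk, of_apply, ← univ_sigma_univ, sum_sigma]

lemma smul_one_sub_blk_mulVec_eq_sum_erase {R : Type*} [CommRing R]
    (M : Matrix ((i : Fin n) × Fin (k i)) ((i : Fin n) × Fin (k i)) R)
    {v : ((i : Fin n) × Fin (k i)) → R} {μ : R} (hv : M *ᵥ v = μ • v) (i : Fin n) :
    (μ • 1 - blk M i i) *ᵥ (fun a => v ⟨i, a⟩) =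
      ∑ j ∈ univ.erase i, blk M i j *ᵥ fun b => v ⟨j, b⟩ := by
  ext a
  have h := mulVec_sigma_apply M v i a
  rw [hv, ← add_sum_erase _ _ (mem_univ i)] at h
  simp only [sub_mulVec, smul_mulVec, one_mulVec, Pi.sub_apply, Pi.smul_apply, smul_eq_mul,
    Finset.sum_apply] at h ⊢
  rw [h]
  ring

variable {𝕜 : Type*} [RCLike 𝕜]

lemma norm_blk_le_norm_resolvent_mul_sum
    (M : Matrix ((i : Fin n) × Fin (k i)) ((i : Fin n) × Fin (k i)) 𝕜)
    {v : ((i : Fin n) × Fin (k i)) → 𝕜} {μ : 𝕜} (hv : M *ᵥ v = μ • v) {i : Fin n}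
    (hi : μ ∉ spectrum 𝕜 (blk M i i)) :
    ‖(WithLp.toLp 2 fun a => v ⟨i, a⟩ : EuclideanSpace 𝕜 (Fin (k i)))‖ ≤
      ‖(μ • 1 - blk M i i)⁻¹‖ * ∑ j ∈ univ.erase i,
        ‖blk M i j‖ * ‖(WithLp.toLp 2 fun b => v ⟨j, b⟩ : EuclideanSpace 𝕜 (Fin (k j)))‖ := by
  have hunit : IsUnit (μ • 1 - blk M i i).det := by
    rw [← isUnit_iff_isUnit_det]
    simpa [spectrum.mem_iff, Algebra.algebraMap_eq_smul_one] using hi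
  have hvi : (fun a => v ⟨i, a⟩) = (μ • 1 - blk M i i)⁻¹ *ᵥ
      ∑ j ∈ univ.erase i, blk M i j *ᵥ fun b => v ⟨j, b⟩ := by
    rw [← smul_one_sub_blk_mulVec_eq_sum_erase M hv, mulVec_mulVec, nonsing_inv_mul _ hunit,
      one_mulVec]
  set w := ∑ j ∈ univ.erase i, blk M i j *ᵥ fun b => v ⟨j, b⟩
  have hw : ‖(WithLp.toLp 2 w : EuclideanSpace 𝕜 (Fin (k i)))‖ ≤ ∑ j ∈ univ.erase i,
      ‖blk M i j‖ * ‖(WithLp.toLp 2 fun b => v ⟨j, b⟩ : EuclideanSpace 𝕜 (Fin (k j)))‖ := by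
    rw [WithLp.toLp_sum]
    exact (norm_sum_le _ _).trans (sum_le_sum fun j _ => norm_toLp_mulVec_le _ _)
  rw [hvi]
  exact (norm_toLp_mulVec_le _ w).trans (mul_le_mul_of_nonneg_left hw (norm_nonneg _))

theorem exists_le_norm_resolvent_blk_mul_sum_of_mem_spectrum
    (M : Matrix ((i : Fin n) × Fin (k i)) ((i : Fin n) × Fin (k i)) 𝕜) {μ : 𝕜}
    (hμ : μ ∈ spectrum 𝕜 M) (hres : ∀ i, μ ∉ spectrum 𝕜 (blk M i i))
    {d : Fin n → ℝ} (hd : ∀ i, 0 < d i) :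
    ∃ i, d i ≤ ‖(μ • 1 - blk M i i)⁻¹‖ * ∑ j ∈ univ.erase i, ‖blk M i j‖ * d j := by
  obtain ⟨v, hv⟩ := (Module.End.hasEigenvalue_iff_mem_spectrum.2
    (by rwa [spectrum_toLin'])).exists_hasEigenvector (f := toLin' M)
  have hMv : M *ᵥ v = μ • v := by simpa using hv.apply_eq_smul
  refine exists_le_mul_sum_erase_of_le_mul_sum_erase
    (N := fun i => ‖(WithLp.toLp 2 fun a => v ⟨i, a⟩ : EuclideanSpace 𝕜 (Fin (k i)))‖)
    (fun _ => norm_nonneg _) ?_ hd (fun _ => norm_nonneg _) (fun _ _ => norm_nonneg _)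
    fun i => norm_blk_le_norm_resolvent_mul_sum M hMv (hres i)
  obtain ⟨⟨i, a⟩, hia⟩ := Function.ne_iff.1 hv.2
  exact ⟨i, norm_ne_zero_iff.2 fun h => hia (congr_fun (congrArg WithLp.ofLp h) a)⟩

end BlockMatrix

lemma specNorm_resolvent_le_resolventSupRHP {m : ℕ} (B : Matrix (Fin m) (Fin m) ℝ) {μ : ℂ}
    (hμ : 0 ≤ μ.re) (hB : 0 < resolventSupRHP B) :
    specNorm ((μ • 1 - B.map (algebraMap ℝ ℂ))⁻¹) ≤ resolventSupRHP B := by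
  by_cases hbdd : BddAbove (Set.range fun lam : {z : ℂ // 0 ≤ z.re} =>
      specNorm ((lam.1 • (1 : Matrix (Fin m) (Fin m) ℂ) - B.map (algebraMap ℝ ℂ))⁻¹))
  · exact le_ciSup hbdd ⟨μ, hμ⟩
  -- an unbounded supremum is `0` in `ℝ`
  · exact absurd (Real.iSup_of_not_bddAbove hbdd) hB.ne'

theorem block_scaled_diag_dominant_hurwitz {n : ℕ} (k : Fin n → ℕ)
    (A : Matrix ((i : Fin n) × Fin (k i)) ((i : Fin n) × Fin (k i)) ℝ)
    (hblk : ∀ i, IsHurwitz (blk A i i))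
    (d : Fin n → ℝ) (hd : ∀ i, 0 < d i)
    (hdom : ∀ i, (resolventSupRHP (blk A i i))⁻¹ * d i >
        ∑ j ∈ Finset.univ.erase i, specNormR (blk A i j) * d j) :
    IsHurwitz A := by
  intro μ hμ
  by_contra! hre
  have hres : ∀ i, μ ∉ spectrum ℂ (blk (A.map (algebraMap ℝ ℂ)) i i) := fun i h =>
    hre.not_gt (hblk i μ (blk_map A _ i i ▸ h))
  obtain ⟨i, hi⟩ := exists_le_norm_resolvent_blk_mul_sum_of_mem_spectrum _ hμ hres hd
  simp only [blk_map] at hi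
  set R := resolventSupRHP (blk A i i)
  set S := ∑ j ∈ univ.erase i, specNormR (blk A i j) * d j
  have hS : 0 ≤ S := sum_nonneg fun j _ => mul_nonneg (norm_nonneg _) (hd j).le
  have hR : 0 < R := inv_pos.1 ((pos_iff_pos_of_mul_pos (hS.trans_lt (hdom i))).2 (hd i))
  have hoff : ∑ j ∈ univ.erase i, ‖(blk A i j).map (algebraMap ℝ ℂ)‖ * d j ≤ S :=
    sum_le_sum fun j _ => mul_le_mul_of_nonneg_right (l2_opNorm_map_ofReal_le _) (hd j).le
  have : d i < d i := calc
    d i ≤ ‖(μ • 1 - (blk A i i).map (algebraMap ℝ ℂ))⁻¹‖ *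
        ∑ j ∈ univ.erase i, ‖(blk A i j).map (algebraMap ℝ ℂ)‖ * d j := hi
    _ ≤ R * S := mul_le_mul (specNorm_resolvent_le_resolventSupRHP _ hre hR) hoff
        (sum_nonneg fun j _ => mul_nonneg (norm_nonneg _) (hd j).le) hR.le
    _ < R * (R⁻¹ * d i) := mul_lt_mul_of_pos_left (hdom i) hR
    _ = d i := mul_inv_cancel_left₀ hR.ne' _
  exact lt_irrefl _ this
end

section
/- Let A ∈ ℝ^{N×N} be block partitioned into n×n blocks A_{ij} ∈ ℝ^{k_i×k_j}. Suppose there exist positive definite P_i ∈ ℝ^{k_i×k_i} and positive semidefinite matrices W_{ij} ∈ ℝ^{k_i×k_i}, V_{ij} ∈ ℝ^{k_j×k_j} such that: (a) P_i A_{ii} + A_{ii}ᵀ P_i + V_{ii} + W_{ii} ⪯ 0 for all i; (b) the block matrix [[W_{ij}, -P_i A_{ij}], [-A_{ij}ᵀ P_i, V_{ij}]] ⪰ 0 for all i ≠ j; (c) V_{ii} ≻ Σ_{j≠i} V_{ji} and W_{ii} ≻ Σ_{j≠i} W_{ij} for all i. Then the block-diagonal matrix P = diag(P_1,…,P_n)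 is positive definite and P·A + Aᵀ·P is negative definite. -/
/-! Write `x` in blocks `xᵢ`, so that `xᵀ P A x = ∑ᵢ ∑ⱼ xᵢᵀ Pᵢ Aᵢⱼ xⱼ`. Condition (a) bounds
each diagonal term `2 xᵢᵀ Pᵢ Aᵢᵢ xᵢ` by `-(xᵢᵀ Vᵢᵢ xᵢ + xᵢᵀ Wᵢᵢ xᵢ)`, and (b), evaluated at
`(xᵢ, xⱼ)`, bounds each off-diagonal term `2 xᵢᵀ Pᵢ Aᵢⱼ xⱼ` by `xᵢᵀ Wᵢⱼ xᵢ + xⱼᵀ Vᵢⱼ xⱼ`.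
Summing, and regrouping the `V`-terms by column, `-xᵀ (P A + Aᵀ P) x` is at least
`∑ᵢ xᵢᵀ (Wᵢᵢ - ∑_{j ≠ i} Wᵢⱼ + Vᵢᵢ - ∑_{j ≠ i} Vⱼᵢ) xᵢ`, which is positive for `x ≠ 0` by (c). -/

open Matrix Finset

namespace Matrix

section Blocks

variable {n : ℕ} {k : Fin n → ℕ} {R : Type*}

def blockVec (x : ((i : Fin n) × Fin (k i)) → R) (i : Fin n) : Fin (k i) → R :=
  fun a => x ⟨i, a⟩

lemma exists_blockVec_ne_zero [Zero R] {x : ((i : Fin n) × Fin (k i)) → R} (hx : x ≠ 0) :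
    ∃ i, blockVec x i ≠ 0 := by
  obtain ⟨⟨i, a⟩, hxa⟩ := Function.ne_iff.mp hx
  exact ⟨i, fun h => hxa (congrFun h a)⟩

lemma dotProduct_mulVec_eq_sum_blk [NonUnitalNonAssocSemiring R]
    (M : Matrix ((i : Fin n) × Fin (k i)) ((i : Fin n) × Fin (k i)) R)
    (x y : ((i : Fin n) × Fin (k i)) → R) :
    x ⬝ᵥ M *ᵥ y = ∑ i, ∑ j, blockVec x i ⬝ᵥ blk M i j *ᵥ blockVec y j := by
  simp only [dotProduct, mulVec, blk, blockVec, of_apply, Finset.mul_sum,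
    ← Finset.univ_sigma_univ, Finset.sum_sigma]
  exact Finset.sum_congr rfl fun i _ => Finset.sum_comm

lemma blk_blockDiagonal'_self [Zero R] (P : ∀ i, Matrix (Fin (k i)) (Fin (k i)) R) (i : Fin n) :
    blk (blockDiagonal' P) i i = P i := by
  ext a b
  simp [blk, blockDiagonal'_apply_eq]

lemma blk_blockDiagonal'_of_ne [Zero R] (P : ∀ i, Matrix (Fin (k i)) (Fin (k i)) R)
    {i j : Fin n} (h : i ≠ j) : blk (blockDiagonal' P) i j = 0 := by
  ext a b
  simp [blk, blockDiagonal'_apply_ne _ _ _ h]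

lemma blk_blockDiagonal'_mul [NonUnitalNonAssocSemiring R]
    (P : ∀ i, Matrix (Fin (k i)) (Fin (k i)) R)
    (M : Matrix ((i : Fin n) × Fin (k i)) ((i : Fin n) × Fin (k i)) R) (i j : Fin n) :
    blk (blockDiagonal' P * M) i j = P i * blk M i j := by
  ext a b
  simp only [blk, of_apply, mul_apply, ← Finset.univ_sigma_univ, Finset.sum_sigma]
  rw [Finset.sum_eq_single i]
  · simp [blockDiagonal'_apply_eq]
  · intro l _ hl
    simp [blockDiagonal'_apply_ne _ _ _ (Ne.symm hl)]
  · simp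

lemma dotProduct_blockDiagonal'_mulVec [NonUnitalNonAssocSemiring R]
    (P : ∀ i, Matrix (Fin (k i)) (Fin (k i)) R) (x y : ((i : Fin n) × Fin (k i)) → R) :
    x ⬝ᵥ blockDiagonal' P *ᵥ y = ∑ i, blockVec x i ⬝ᵥ P i *ᵥ blockVec y i := by
  rw [dotProduct_mulVec_eq_sum_blk]
  refine Finset.sum_congr rfl fun i _ => ?_
  rw [Finset.sum_eq_single i (fun j _ hj => ?_) (by simp), blk_blockDiagonal'_self]
  rw [blk_blockDiagonal'_of_ne P hj.symm, zero_mulVec, dotProduct_zero]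

open scoped ComplexOrder

variable {𝕜 : Type*} [RCLike 𝕜]

lemma PosDef.blockDiagonal' {P : ∀ i, Matrix (Fin (k i)) (Fin (k i)) 𝕜}
    (hP : ∀ i, (P i).PosDef) : (Matrix.blockDiagonal' P).PosDef := by
  refine PosDef.of_dotProduct_mulVec_pos ?_ fun x hx => ?_
  · rw [IsHermitian, blockDiagonal'_conjTranspose]
    exact congrArg _ (funext fun i => (hP i).isHermitian.eq)
  obtain ⟨i₀, hi₀⟩ := exists_blockVec_ne_zero hx
  rw [dotProduct_blockDiagonal'_mulVec]
  exact Finset.sum_pos' (fun i _ => (hP i).posSemidef.dotProduct_mulVec_nonneg _)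
    ⟨i₀, mem_univ _, (hP i₀).dotProduct_mulVec_pos hi₀⟩

end Blocks

section Real

variable {m m' : Type*} [Fintype m] [Fintype m']

lemma PosSemidef.two_mul_dotProduct_mulVec_le_of_fromBlocks {W : Matrix m m ℝ}
    {V : Matrix m' m' ℝ} {B : Matrix m m' ℝ} (h : (fromBlocks W (-B) (-Bᵀ) V).PosSemidef)
    (u : m → ℝ) (v : m' → ℝ) :
    2 * (u ⬝ᵥ B *ᵥ v) ≤ u ⬝ᵥ W *ᵥ u + v ⬝ᵥ V *ᵥ v := by
  have h₀ := h.dotProduct_mulVec_nonneg (Sum.elim u v)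
  simp only [star_trivial, fromBlocks_mulVec, sumElim_dotProduct_sumElim, neg_mulVec,
    dotProduct_add, dotProduct_neg, Sum.elim_comp_inl, Sum.elim_comp_inr,
    dotProduct_transpose_mulVec] at h₀
  linarith

lemma PosSemidef.two_mul_dotProduct_mulVec_add_le_zero {M V W : Matrix m m ℝ}
    (h : (-(M + Mᵀ + V + W)).PosSemidef) (u : m → ℝ) :
    2 * (u ⬝ᵥ M *ᵥ u) + u ⬝ᵥ V *ᵥ u + u ⬝ᵥ W *ᵥ u ≤ 0 := by
  have h₀ := h.dotProduct_mulVec_nonneg u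
  simp only [star_trivial, neg_mulVec, add_mulVec, dotProduct_neg, dotProduct_add,
    dotProduct_transpose_mulVec] at h₀
  linarith

lemma posDef_neg_mul_add_transpose_mul {S M : Matrix m m ℝ} (hS : S.IsHermitian)
    (h : ∀ x ≠ 0, x ⬝ᵥ (S * M) *ᵥ x < 0) : (-(S * M + Mᵀ * S)).PosDef := by
  have hSt : Sᵀ = S := by simpa [conjTranspose_eq_transpose_of_trivial] using hS.eq
  refine PosDef.of_dotProduct_mulVec_pos ?_ fun x hx => ?_
  · simp only [IsHermitian, conjTranspose_eq_transpose_of_trivial, transpose_neg,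
      transpose_add, transpose_mul, transpose_transpose, hSt, add_comm]
  have hMS : Mᵀ * S = (S * M)ᵀ := by rw [transpose_mul, hSt]
  rw [star_trivial, hMS, neg_mulVec, add_mulVec, dotProduct_neg, dotProduct_add,
    dotProduct_transpose_mulVec]
  linarith [h x hx]

end Real

end Matrix

lemma two_mul_sum_sum_add_sum_le_zero {ι : Type*} [Fintype ι] [DecidableEq ι]
    {q w v : ι → ι → ℝ} (hdiag : ∀ i, 2 * q i i + v i i + w i i ≤ 0)
    (hoff : ∀ i j, i ≠ j → 2 * q i j ≤ w i j + v i j) :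
    2 * ∑ i, ∑ j, q i j + ∑ i, ((w i i - ∑ j ∈ univ.erase i, w i j)
      + (v i i - ∑ j ∈ univ.erase i, v j i)) ≤ 0 := by
  have hrow : ∀ i, 2 * ∑ j, q i j ≤
      -(v i i + w i i) + ∑ j ∈ univ.erase i, w i j + ∑ j ∈ univ.erase i, v i j := by
    intro i
    have hoff_sum : ∑ j ∈ univ.erase i, 2 * q i j ≤ ∑ j ∈ univ.erase i, (w i j + v i j) :=
      Finset.sum_le_sum fun j hj => hoff i j (Finset.ne_of_mem_erase hj).symm
    rw [← Finset.add_sum_erase _ _ (mem_univ i), mul_add, Finset.mul_sum]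
    rw [Finset.sum_add_distrib] at hoff_sum
    linarith [hdiag i]
  have hswap : ∑ i, ∑ j ∈ univ.erase i, v i j = ∑ i, ∑ j ∈ univ.erase i, v j i := by
    simp only [Finset.sum_erase_eq_sub (mem_univ _), Finset.sum_sub_distrib]
    rw [Finset.sum_comm]
  have hsum := Finset.sum_le_sum fun i (_ : i ∈ univ) => hrow i
  simp only [← Finset.mul_sum, Finset.sum_add_distrib, Finset.sum_sub_distrib,
    Finset.sum_neg_distrib] at hsum ⊢
  linarith

theorem block_lmi_implies_block_diagonal_stability_general {n : ℕ} (k : Fin n → ℕ)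
    (A : Matrix ((i : Fin n) × Fin (k i)) ((i : Fin n) × Fin (k i)) ℝ)
    (P : ∀ i, Matrix (Fin (k i)) (Fin (k i)) ℝ)
    (W : ∀ (i _j : Fin n), Matrix (Fin (k i)) (Fin (k i)) ℝ)
    (V : ∀ (_i j : Fin n), Matrix (Fin (k j)) (Fin (k j)) ℝ)
    (hP : ∀ i, (P i).PosDef)
    (ha : ∀ i, (-(P i * blk A i i + (blk A i i)ᵀ * P i + V i i + W i i)).PosSemidef)
    (hb : ∀ i j, i ≠ j →
      (Matrix.fromBlocks (W i j) (-(P i * blk A i j))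
        (-((blk A i j)ᵀ * P i)) (V i j)).PosSemidef)
    (hcV : ∀ i, (V i i - ∑ j ∈ Finset.univ.erase i, V j i).PosDef)
    (hcW : ∀ i, (W i i - ∑ j ∈ Finset.univ.erase i, W i j).PosDef) :
    (Matrix.blockDiagonal' P).PosDef ∧
      (-(Matrix.blockDiagonal' P * A + Aᵀ * Matrix.blockDiagonal' P)).PosDef := by
  have hPD := PosDef.blockDiagonal' hP
  refine ⟨hPD, posDef_neg_mul_add_transpose_mul hPD.isHermitian fun x hx => ?_⟩
  have hPA : ∀ i j, (blk A i j)ᵀ * P i = (P i * blk A i j)ᵀ := fun i j => by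
    rw [transpose_mul, ← conjTranspose_eq_transpose_of_trivial (P i), (hP i).isHermitian.eq]
  set y := blockVec x
  have hdom : 0 < ∑ i, y i ⬝ᵥ ((W i i - ∑ j ∈ univ.erase i, W i j)
      + (V i i - ∑ j ∈ univ.erase i, V j i)) *ᵥ y i := by
    have hD := PosDef.blockDiagonal' fun i => (hcW i).add_posSemidef (hcV i).posSemidef
    simpa only [dotProduct_blockDiagonal'_mulVec, star_trivial] using hD.dotProduct_mulVec_pos hx
  have hbound := two_mul_sum_sum_add_sum_le_zero
    (q := fun i j => y i ⬝ᵥ (P i * blk A i j) *ᵥ y j) (w := fun i j => y i ⬝ᵥ W i j *ᵥ y i)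
    (v := fun i j => y j ⬝ᵥ V i j *ᵥ y j)
    (fun i => (hPA i i ▸ ha i).two_mul_dotProduct_mulVec_add_le_zero (y i))
    fun i j hij =>
      (hPA i j ▸ hb i j hij).two_mul_dotProduct_mulVec_le_of_fromBlocks (y i) (y j)
  simp only [add_mulVec, sub_mulVec, sum_mulVec, dotProduct_add, dotProduct_sub,
    dotProduct_sum] at hdom
  rw [dotProduct_mulVec_eq_sum_blk]
  simp only [blk_blockDiagonal'_mul]
  linarith

theorem block_lmi_implies_block_diagonal_stability {n : ℕ} (k : Fin n → ℕ)
    (A : Matrix ((i : Fin n) × Fin (k i)) ((i : Fin n) × Fin (k i)) ℝ)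
    (P : ∀ i, Matrix (Fin (k i)) (Fin (k i)) ℝ)
    (W : ∀ (i _j : Fin n), Matrix (Fin (k i)) (Fin (k i)) ℝ)
    (V : ∀ (_i j : Fin n), Matrix (Fin (k j)) (Fin (k j)) ℝ)
    (hP : ∀ i, (P i).PosDef)
    (hW : ∀ i j, (W i j).PosSemidef)
    (hV : ∀ i j, (V i j).PosSemidef)
    (ha : ∀ i, (-(P i * blk A i i + (blk A i i)ᵀ * P i + V i i + W i i)).PosSemidef)
    (hb : ∀ i j, i ≠ j →
      (Matrix.fromBlocks (W i j) (-(P i * blk A i j))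
        (-((blk A i j)ᵀ * P i)) (V i j)).PosSemidef)
    (hcV : ∀ i, (V i i - ∑ j ∈ Finset.univ.erase i, V j i).PosDef)
    (hcW : ∀ i, (W i i - ∑ j ∈ Finset.univ.erase i, W i j).PosDef) :
    (Matrix.blockDiagonal' P).PosDef ∧
      (-(Matrix.blockDiagonal' P * A + Aᵀ * Matrix.blockDiagonal' P)).PosDef :=
  block_lmi_implies_block_diagonal_stability_general k A P W V hP ha hb hcV hcW
end

section
/- Let A ∈ ℝ^{n×n} with comparison matrix M(A) (M(A)_{ii} = -max(-a_{ii},0), M(A)_{ij} = |a_{ij}| for i≠j) Hurwitz. Then there exist positive scalars p_i and nonnegative w_{ij}, v_{ij} such that for all i: -a_{ii} ≥ (w_{ii}+v_{ii})/(2p_i), |a_{ij}| ≤ √(w_{ij} v_{ij})/p_i for j≠i, w_{ii} > Σ_{j≠i} w_{ij}, and v_{ii} > Σ_{j≠i} v_{ji}. Concretely, given d, e > 0 with -a_{ii}d_i > Σ_{j≠i}|a_{ij}|d_j and -a_{ii}e_i > Σ_{j≠i}|a_{ji}|e_j, the choices w_{ij} = |a_{ij}| e_i d_j/d_i², v_{ij}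 = |a_{ij}| e_i/d_j, p_i = e_i/d_i work. -/
open Matrix Finset

theorem comparison_hurwitz_implies_lin_cond {n : ℕ} (A : Matrix (Fin n) (Fin n) ℝ)
    (hM : IsHurwitz (compMat A))
    (d e : Fin n → ℝ) (hd : ∀ i, 0 < d i) (he : ∀ i, 0 < e i)
    (hrow : ∀ i, -(A i i) * d i > ∑ j ∈ Finset.univ.erase i, |A i j| * d j)
    (hcol : ∀ i, -(A i i) * e i > ∑ j ∈ Finset.univ.erase i, |A j i| * e j) :
    (∃ (p : Fin n → ℝ) (w v : Fin n → Fin n → ℝ),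
      (∀ i, 0 < p i) ∧ (∀ i j, 0 ≤ w i j) ∧ (∀ i j, 0 ≤ v i j) ∧
      (∀ i, -(A i i) ≥ (w i i + v i i) / (2 * p i)) ∧
      (∀ i j, j ≠ i → |A i j| ≤ Real.sqrt (w i j * v i j) / p i) ∧
      (∀ i, w i i > ∑ j ∈ Finset.univ.erase i, w i j) ∧
      (∀ i, v i i > ∑ j ∈ Finset.univ.erase i, v j i)) ∧
    -- the concrete choices work
    (let w : Fin n → Fin n → ℝ := fun i j => |A i j| * e i * d j / (d i) ^ 2
     let v : Fin n → Fin n → ℝ := fun i j => |A i j| * e i / d j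
     let p : Fin n → ℝ := fun i => e i / d i
     (∀ i, -(A i i) ≥ (w i i + v i i) / (2 * p i)) ∧
     (∀ i j, j ≠ i → |A i j| ≤ Real.sqrt (w i j * v i j) / p i) ∧
     (∀ i, w i i > ∑ j ∈ Finset.univ.erase i, w i j) ∧
     (∀ i, v i i > ∑ j ∈ Finset.univ.erase i, v j i)) := by
  have hdne : ∀ i, d i ≠ 0 := fun i => (hd i).ne'
  have hene : ∀ i, e i ≠ 0 := fun i => (he i).ne'
  have hAneg : ∀ i, A i i < 0 := by
    intro i
    have hs : (0:ℝ) ≤ ∑ j ∈ Finset.univ.erase i, |A i j| * d j :=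
      Finset.sum_nonneg fun j _ => mul_nonneg (abs_nonneg _) (hd j).le
    nlinarith [hrow i, hd i]
  set w : Fin n → Fin n → ℝ := fun i j => |A i j| * e i * d j / (d i) ^ 2 with hwdef
  set v : Fin n → Fin n → ℝ := fun i j => |A i j| * e i / d j with hvdef
  set p : Fin n → ℝ := fun i => e i / d i with hpdef
  have hp : ∀ i, 0 < p i := fun i => div_pos (he i) (hd i)
  have hwpos : ∀ i j, 0 ≤ w i j := fun i j => by
    have h1 := hd i; have h2 := hd j; have h3 := he i
    simp only [hwdef]; positivity
  have hvpos : ∀ i j, 0 ≤ v i j := fun i j => by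
    have h1 := hd j; have h2 := he i
    simp only [hvdef]; positivity
  have key1 : ∀ i, -(A i i) ≥ (w i i + v i i) / (2 * p i) := by
    intro i
    have h1 := hdne i; have h2 := hene i
    have : (w i i + v i i) / (2 * p i) = -(A i i) := by
      simp only [hwdef, hvdef, hpdef, abs_of_neg (hAneg i)]
      field_simp
      ring
    rw [this]
  have key2 : ∀ i j, j ≠ i → |A i j| ≤ Real.sqrt (w i j * v i j) / p i := by
    intro i j _
    have h1 := hdne i; have h2 := hdne j; have h3 := hene i
    have hprod : w i j * v i j = (|A i j| * e i / d i) ^ 2 := by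
      simp only [hwdef, hvdef]
      field_simp
    rw [hprod, Real.sqrt_sq (by have h4 := (hd i).le; have h5 := (he i).le; positivity)]
    have : |A i j| * e i / d i / p i = |A i j| := by
      simp only [hpdef]; field_simp
    rw [this]
  have key3 : ∀ i, w i i > ∑ j ∈ Finset.univ.erase i, w i j := by
    intro i
    have hsum : ∑ j ∈ Finset.univ.erase i, w i j
        = (∑ j ∈ Finset.univ.erase i, |A i j| * d j) * (e i / d i ^ 2) := by
      rw [Finset.sum_mul]
      refine Finset.sum_congr rfl fun j _ => ?_
      simp only [hwdef]; ring
    have hwii : w i i = (-(A i i) * d i) * (e i / d i ^ 2) := by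
      simp only [hwdef, abs_of_neg (hAneg i)]; ring
    rw [hsum, hwii]
    exact mul_lt_mul_of_pos_right (hrow i) (div_pos (he i) (pow_pos (hd i) 2))
  have key4 : ∀ i, v i i > ∑ j ∈ Finset.univ.erase i, v j i := by
    intro i
    have hsum : ∑ j ∈ Finset.univ.erase i, v j i
        = (∑ j ∈ Finset.univ.erase i, |A j i| * e j) * (1 / d i) := by
      rw [Finset.sum_mul]
      refine Finset.sum_congr rfl fun j _ => ?_
      simp only [hvdef]; ring
    have hvii : v i i = (-(A i i) * e i) * (1 / d i) := by
      simp only [hvdef, abs_of_neg (hAneg i)]; ring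
    rw [hsum, hvii]
    exact mul_lt_mul_of_pos_right (hcol i) (by simp [hd i])
  exact ⟨⟨p, w, v, hp, hwpos, hvpos, key1, key2, key3, key4⟩,
    key1, key2, key3, key4⟩
end

section
/- If v_{ij} ≥ 0 satisfy v_{ii} > Σ_{j≠i} v_{ji} for all i (strict column diagonal dominance of the Metzler matrix V with V_{ii} = -v_{ii}, V_{ij} = v_{ij}), then there exist positive scalars d_1,…,d_n such that v_{ii} d_i² > Σ_{j≠i} v_{ij} d_j² for all i. -/
open Finset

theorem column_dominant_implies_scaled_row_dominant {n : ℕ}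
    (v : Fin n → Fin n → ℝ) (hv : ∀ i j, 0 ≤ v i j)
    (hdom : ∀ i, v i i > ∑ j ∈ Finset.univ.erase i, v j i) :
    ∃ d : Fin n → ℝ, (∀ i, 0 < d i) ∧
      ∀ i, v i i * (d i) ^ 2 > ∑ j ∈ Finset.univ.erase i, v i j * (d j) ^ 2 := by
  rcases Nat.eq_zero_or_pos n with hn | hn
  · subst hn
    exact ⟨fun _ => 1, fun i => i.elim0, fun i => i.elim0⟩
  have hne : (Finset.univ : Finset (Fin n)).Nonempty := by
    simpa using Finset.univ_nonempty_iff.2 (Fin.pos_iff_nonempty.1 hn)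
  set w : Fin n → ℝ := fun i => v i i with hw
  have hwpos : ∀ i, 0 < w i := fun i =>
    lt_of_le_of_lt (Finset.sum_nonneg fun j _ => hv j i) (hdom i)
  set B : Matrix (Fin n) (Fin n) ℝ := Matrix.of (fun i j => if i = j then 0 else v i j) with hBdef
  have hB : ∀ i j, 0 ≤ B i j := by
    intro i j
    simp only [hBdef, Matrix.of_apply]
    split <;> [rfl; exact hv i j]
  have hcolsum : ∀ j, ∑ i, B i j = ∑ i ∈ Finset.univ.erase j, v i j := by
    intro j
    rw [← Finset.add_sum_erase _ _ (Finset.mem_univ j)]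
    have h0 : B j j = 0 := by simp [hBdef]
    rw [h0, zero_add]
    refine Finset.sum_congr rfl fun i hi => ?_
    simp [hBdef, (Finset.mem_erase.1 hi).1]
  have hcol : ∀ j, ∑ i, B i j < w j := fun j => (hcolsum j).symm ▸ hdom j
  -- the ratio bound r
  set r : ℝ := Finset.univ.sup' hne (fun j => (∑ i, B i j) / w j) with hr
  have hrle : ∀ j, (∑ i, B i j) / w j ≤ r :=
    fun j => Finset.le_sup' (fun j => (∑ i, B i j) / w j) (Finset.mem_univ j)
  have hr1 : r < 1 := by
    rw [hr, Finset.sup'_lt_iff]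
    intro j _
    exact (div_lt_one (hwpos j)).2 (hcol j)
  have hrB : ∀ j, ∑ i, B i j ≤ r * w j := by
    intro j
    calc ∑ i, B i j = (∑ i, B i j) / w j * w j := (div_mul_cancel₀ _ (hwpos j).ne').symm
    _ ≤ r * w j := mul_le_mul_of_nonneg_right (hrle j) (hwpos j).le
  have hr0 : 0 ≤ r := by
    obtain ⟨j, _⟩ := hne
    have h1 : (0:ℝ) ≤ (∑ i, B i j) / w j :=
      div_nonneg (Finset.sum_nonneg fun i _ => hB i j) (hwpos j).le
    exact h1.trans (hrle j)
  set C : Matrix (Fin n) (Fin n) ℝ := Matrix.of (fun i j => B i j / w i) with hCdef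
  have hC0 : ∀ i j, 0 ≤ C i j := fun i j =>
    div_nonneg (hB i j) (hwpos i).le
  set f : ℕ → Fin n → ℝ := fun k => (C ^ k).mulVec 1 with hf
  have hf0 : ∀ i, f 0 i = 1 := by
    intro i; simp [hf]
  have hfsucc : ∀ k, f (k + 1) = C.mulVec (f k) := by
    intro k
    simp [hf, pow_succ', Matrix.mulVec_mulVec]
  have hfnn : ∀ k i, 0 ≤ f k i := by
    intro k
    induction k with
    | zero => intro i; rw [hf0]; norm_num
    | succ k ih =>
      intro i
      rw [hfsucc]
      simp only [Matrix.mulVec, dotProduct]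
      exact Finset.sum_nonneg fun j _ => mul_nonneg (hC0 i j) (ih j)
  set W : ℝ := ∑ i, w i with hW
  have hWpos : 0 < W := Finset.sum_pos (fun i _ => hwpos i) hne
  -- key contraction estimate
  have key : ∀ y : Fin n → ℝ, (∀ j, 0 ≤ y j) →
      ∑ i, w i * (C.mulVec y) i ≤ r * ∑ j, w j * y j := by
    intro y hy
    have h1 : ∑ i, w i * (C.mulVec y) i = ∑ j, (∑ i, B i j) * y j := by
      simp only [Matrix.mulVec, dotProduct, hCdef, Matrix.of_apply,
        Finset.mul_sum, Finset.sum_mul]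
      rw [Finset.sum_comm]
      refine Finset.sum_congr rfl fun j _ => Finset.sum_congr rfl fun i _ => ?_
      have hwi := (hwpos i).ne'
      field_simp
    rw [h1, Finset.mul_sum]
    apply Finset.sum_le_sum
    intro j _
    rw [← mul_assoc]
    exact mul_le_mul_of_nonneg_right (hrB j) (hy j)
  have hS : ∀ k, ∑ i, w i * f k i ≤ r ^ k * W := by
    intro k
    induction k with
    | zero => simp [hf0, hW]
    | succ k ih =>
      rw [hfsucc]
      calc ∑ i, w i * (C.mulVec (f k)) i ≤ r * ∑ j, w j * f k j := key _ (hfnn k)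
      _ ≤ r * (r ^ k * W) := mul_le_mul_of_nonneg_left ih hr0
      _ = r ^ (k + 1) * W := by ring
  -- choose N
  set m : ℝ := Finset.univ.inf' hne w with hm
  have hmpos : 0 < m := by
    rw [hm, Finset.lt_inf'_iff]
    intro i _; exact hwpos i
  have hmle : ∀ i, m ≤ w i := fun i => Finset.inf'_le _ (Finset.mem_univ i)
  obtain ⟨N, hN⟩ := exists_pow_lt_of_lt_one (div_pos hmpos hWpos) hr1
  have hNbound : r ^ (N + 1) * W < m := by
    have h1 : r ^ (N + 1) ≤ r ^ N := pow_le_pow_of_le_one hr0 hr1.le (by omega)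
    calc r ^ (N + 1) * W ≤ r ^ N * W := mul_le_mul_of_nonneg_right h1 hWpos.le
    _ < (m / W) * W := mul_lt_mul_of_pos_right hN hWpos
    _ = m := by field_simp
  -- small tail entrywise
  have htail : ∀ i, f (N + 1) i < 1 := by
    intro i
    have h1 : w i * f (N + 1) i ≤ ∑ j, w j * f (N + 1) j :=
      Finset.single_le_sum (f := fun j => w j * f (N + 1) j)
        (fun j _ => mul_nonneg (hwpos j).le (hfnn _ j)) (Finset.mem_univ i)
    have h2 : w i * f (N + 1) i < w i := by
      calc w i * f (N + 1) i ≤ r ^ (N + 1) * W := h1.trans (hS (N + 1))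
      _ < m := hNbound
      _ ≤ w i := hmle i
    nlinarith [hwpos i]
  set x : Fin n → ℝ := fun i => ∑ k ∈ Finset.range (N + 1), f k i with hx
  have hx1 : ∀ i, 1 ≤ x i := by
    intro i
    rw [hx]
    calc (1:ℝ) = f 0 i := (hf0 i).symm
    _ ≤ ∑ k ∈ Finset.range (N + 1), f k i :=
      Finset.single_le_sum (f := fun k => f k i) (fun k _ => hfnn k i)
        (Finset.mem_range.2 (by omega))
  have hxpos : ∀ i, 0 < x i := fun i => lt_of_lt_of_le one_pos (hx1 i)
  refine ⟨fun i => Real.sqrt (x i), fun i => Real.sqrt_pos.2 (hxpos i), ?_⟩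
  intro i
  have hsq : ∀ j, Real.sqrt (x j) ^ 2 = x j := fun j => Real.sq_sqrt (hxpos j).le
  simp only [hsq]
  -- RHS rewriting
  have h1 : ∑ j, B i j * x j = ∑ j ∈ Finset.univ.erase i, v i j * x j := by
    rw [← Finset.add_sum_erase _ (fun j => B i j * x j) (Finset.mem_univ i)]
    have h0 : B i i = 0 := by simp [hBdef]
    rw [h0, zero_mul, zero_add]
    refine Finset.sum_congr rfl fun j hj => ?_
    simp [hBdef, Ne.symm (Finset.mem_erase.1 hj).1]
  have hRHS : ∑ j ∈ Finset.univ.erase i, v i j * x j = w i * (C.mulVec x) i := by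
    rw [← h1]
    simp only [Matrix.mulVec, dotProduct, hCdef, Matrix.of_apply, Finset.mul_sum]
    refine Finset.sum_congr rfl fun j _ => ?_
    have hwi := (hwpos i).ne'
    field_simp
  have hCx : (C.mulVec x) i = x i - 1 + f (N + 1) i := by
    have hlin : (C.mulVec x) i = ∑ k ∈ Finset.range (N + 1), f (k + 1) i := by
      simp only [Matrix.mulVec, dotProduct, hx, Finset.mul_sum]
      rw [Finset.sum_comm]
      refine Finset.sum_congr rfl fun k _ => ?_
      rw [hfsucc k]
      simp [Matrix.mulVec, dotProduct]
    rw [hlin]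
    have heq : ∑ k ∈ Finset.range (N + 1), f (k + 1) i
        = ∑ k ∈ Finset.range (N + 1), f k i - f 0 i + f (N + 1) i := by
      rw [Finset.sum_range_succ (fun k => f (k + 1) i),
        Finset.sum_range_succ' (fun k => f k i)]
      ring
    rw [heq, hf0]
  rw [hRHS, hCx]
  have h2 : x i - 1 + f (N + 1) i < x i := by
    have := htail i
    linarith
  calc w i * (x i - 1 + f (N + 1) i) < w i * x i :=
    mul_lt_mul_of_pos_left h2 (hwpos i)
  _ = v i i * x i := rfl
end
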